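/- arXiv:2207.01319 — 2 statements merged into one kernel-verified Lean document; each statement's English description precedes it below -/
import Mathlib

section
/- Connection between evaluation types: for any a ∈ F_{q^m}, nonzero b ∈ F_{q^m}, and f ∈ F_{q^m}[x;σ] (zero derivation), f[ D_a(b)·b^{-1} ]·b = f(b)_a, where f[·] denotes remainder evaluation and f(·)_a generalized operator evaluation with D_a(b) = σ(b)a. -/
open Polynomial

noncomputable section

variable {F : Type*} [Field F]

/-- Left multiplication by `x` in the skew polynomial ring `F[x;σ,δ]`,
acting on polynomials viewed as coefficient sequences:
`x ⬝ (∑ fₙ xⁿ) = ∑ σ(fₙ) x^{n+1} + ∑ δ(fₙ) xⁿ`. -/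
def skewXMul (σ : F →+* F) (δ : F → F) (f : F[X]) : F[X] :=
  f.map σ * X + f.sum fun n c => C (δ c) * X ^ n

/-- Multiplication in the skew polynomial ring `F[x;σ,δ]` (with rule `x·a = σ(a)x + δ(a)`),
where polynomials are represented by their coefficient sequences. -/
def skewMul (σ : F →+* F) (δ : F → F) (f g : F[X]) : F[X] :=
  f.sum fun i c => C c * (skewXMul σ δ)^[i] g

/-- The `(σ,δ)`-operator `D_a(b) = σ(b)a + δ(b)`. -/
def opD (σ : F →+* F) (δ : F → F) (a b : F) : F := σ b * a + δ b

/-- Generalized operator evaluation `f(b)_a = ∑ fᵢ D_a^i(b)`. -/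
def opEval (σ : F →+* F) (δ : F → F) (f : F[X]) (b a : F) : F :=
  f.sum fun i c => c * (opD σ δ a)^[i] b

/-! The product rule `(g·h)(b)_a = g(h(b)_a)_a` of operator evaluation reduces the theorem to the
observation that `b` is an operator root of `x − D_a(b)·b⁻¹`: evaluating `f = g·(x − D_a(b)b⁻¹) + v`
at `b` kills the first summand and leaves `v·b`. The product rule itself comes from
`(x·h)(b)_a = D_a(h(b)_a)`, which holds because `D_a(cy) = σ(c)·D_a(y)` when the derivation is zero. -/

section OpEval

variable (σ : F →+* F) (δ : F → F)

lemma opEval_add (p q : F[X]) (b a : F) :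
    opEval σ δ (p + q) b a = opEval σ δ p b a + opEval σ δ q b a :=
  sum_add_index p q _ (fun _ => zero_mul _) (fun _ x y => add_mul x y _)

lemma opEval_monomial (n : ℕ) (c b a : F) :
    opEval σ δ (monomial n c) b a = c * (opD σ δ a)^[n] b :=
  sum_monomial_index c _ (zero_mul _)

lemma opEval_C (v b a : F) : opEval σ δ (C v) b a = v * b :=
  opEval_monomial σ δ 0 v b a

lemma opEval_C_mul (c : F) (p : F[X]) (b a : F) :
    opEval σ δ (C c * p) b a = c * opEval σ δ p b a := by
  induction p using Polynomial.induction_on' with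
  | add p q hp hq => rw [mul_add, opEval_add, opEval_add, hp, hq, mul_add]
  | monomial n d => rw [C_mul_monomial, opEval_monomial, opEval_monomial, mul_assoc]

end OpEval

section ZeroDerivation

variable (σ : F →+* F)

lemma skewXMul_zero (p : F[X]) : skewXMul σ (fun _ => 0) p = p.map σ * X := by
  simp [skewXMul, Polynomial.sum]

lemma opD_zero (a y : F) : opD σ (fun _ => 0) a y = σ y * a :=
  add_zero _

lemma opEval_skewXMul (p : F[X]) (b a : F) :
    opEval σ (fun _ => 0) (skewXMul σ (fun _ => 0) p) b a =
      opD σ (fun _ => 0) a (opEval σ (fun _ => 0) p b a) := by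
  induction p using Polynomial.induction_on' with
  | add p q hp hq =>
      rw [skewXMul_zero, Polynomial.map_add, add_mul, ← skewXMul_zero, ← skewXMul_zero,
        opEval_add, hp, hq, opEval_add, opD_zero, opD_zero, opD_zero, map_add, add_mul]
  | monomial n c =>
      rw [skewXMul_zero, map_monomial, monomial_mul_X, opEval_monomial, opEval_monomial,
        Function.iterate_succ_apply', opD_zero, opD_zero, map_mul, mul_assoc]

lemma opEval_iterate_skewXMul (p : F[X]) (n : ℕ) (b a : F) :
    opEval σ (fun _ => 0) ((skewXMul σ (fun _ => 0))^[n] p) b a =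
      (opD σ (fun _ => 0) a)^[n] (opEval σ (fun _ => 0) p b a) := by
  induction n with
  | zero => rfl
  | succ n ih =>
      rw [Function.iterate_succ_apply', Function.iterate_succ_apply', opEval_skewXMul, ih]

lemma opEval_skewMul (g h : F[X]) (b a : F) :
    opEval σ (fun _ => 0) (skewMul σ (fun _ => 0) g h) b a =
      opEval σ (fun _ => 0) g (opEval σ (fun _ => 0) h b a) a := by
  induction g using Polynomial.induction_on' with
  | add p q hp hq =>
      have hmul : skewMul σ (fun _ => 0) (p + q) h =
          skewMul σ (fun _ => 0) p h + skewMul σ (fun _ => 0) q h :=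
        sum_add_index p q _ (fun _ => by simp) (fun _ x y => by simp [add_mul])
      rw [hmul, opEval_add, hp, hq, opEval_add]
  | monomial n c =>
      have hmul : skewMul σ (fun _ => 0) (monomial n c) h =
          C c * (skewXMul σ (fun _ => 0))^[n] h :=
        sum_monomial_index c _ (by simp)
      rw [hmul, opEval_C_mul, opEval_iterate_skewXMul, opEval_monomial]

lemma opEval_at_zero (g : F[X]) (a : F) : opEval σ (fun _ => 0) g 0 a = 0 := by
  have hfix (i : ℕ) : (opD σ (fun _ => 0) a)^[i] 0 = 0 :=
    Function.iterate_fixed (by rw [opD_zero, map_zero, zero_mul]) i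
  simp [opEval, Polynomial.sum, hfix]

lemma opEval_X_sub_C (c b a : F) :
    opEval σ (fun _ => 0) (X - C c) b a = σ b * a - c * b := by
  rw [sub_eq_add_neg, ← C_neg, ← monomial_one_one_eq_X, opEval_add, opEval_monomial, opEval_C,
    Function.iterate_one, opD_zero, one_mul, neg_mul, ← sub_eq_add_neg]

lemma opEval_X_sub_C_opD_div_self {b : F} (hb : b ≠ 0) (a : F) :
    opEval σ (fun _ => 0) (X - C (σ b * a * b⁻¹)) b a = 0 := by
  rw [opEval_X_sub_C, inv_mul_cancel_right₀ hb, sub_self]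

end ZeroDerivation

theorem remEval_opEval_connection_general {F : Type*} [Field F] (σ : F ≃+* F)
    (f : F[X]) (a b : F) (hb : b ≠ 0)
    (g : F[X]) (v : F)
    (h : f = skewMul σ.toRingHom (fun _ => 0) g (X - C (σ b * a * b⁻¹)) + C v) :
    v * b = opEval σ.toRingHom (fun _ => 0) f b a := by
  have hroot : opEval σ.toRingHom (fun _ => 0) (X - C (σ b * a * b⁻¹)) b a = 0 :=
    opEval_X_sub_C_opD_div_self σ.toRingHom hb a
  rw [h, opEval_add, opEval_skewMul, hroot, opEval_at_zero, opEval_C, zero_add]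

/-- Connection between evaluation types (zero derivation): `f[D_a(b)·b⁻¹]·b = f(b)_a`,
where `f[c]` is the remainder of right division of `f` by `x − c` and `D_a(b) = σ(b)a`. -/
theorem remEval_opEval_connection {F : Type*} [Field F] [Fintype F] (σ : F ≃+* F)
    (f : F[X]) (a b : F) (hb : b ≠ 0)
    (g : F[X]) (v : F)
    (h : f = skewMul σ.toRingHom (fun _ => 0) g (X - C (σ b * a * b⁻¹)) + C v) :
    v * b = opEval σ.toRingHom (fun _ => 0) f b a :=
  remEval_opEval_connection_general σ f a b hb g v h
end
end

section
/- If the rows b₀,…,b_s of a matrix B over F_{q^m}[x;σ,δ] have pairwise distinct w-pivot indices and each b_j is of minimal w-weighted degree in T_j = K ∩ S_j (where S_j is the set of vectors with w-pivot index j together with 0, and K is a left submodule of F_{q^m}[x;σ,δ]^{s+1}), then b₀,…,b_s form a basis of K; that is, every p ∈ K is a left F_{q^m}[x;σ,δ]-linear combination of b₀,…,b_s. -/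
/-!
Division algorithm for weak Popov forms. For a nonzero `p ∈ K` with pivot `j`, the row `bⱼ` has
the same pivot and, by minimality, no larger weighted degree. Since `x·a` has degree `deg a + 1`
and leading coefficient `σ(lc a)`, a monomial left multiple `(c xᵗ)·bⱼ` has the same weighted
degree, pivot and pivot leading coefficient as `p`, so `p - (c xᵗ)·bⱼ ∈ K` has a
lexicographically smaller pair (weighted degree, pivot index). Well-founded induction on this
pair ends at `0`.
-/

open Polynomial

noncomputable section

variable {F : Type*} [Field F]

/-- The `w`-weighted degree of a vector of skew polynomials. -/
def wdeg {F : Type*} [Field F] {s : ℕ} (w : Fin (s + 1) → ℕ)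
    (a : Fin (s + 1) → F[X]) : WithBot ℕ :=
  Finset.univ.sup fun j => (a j).degree + (w j : WithBot ℕ)

/-- `j` is the `w`-pivot index of `a`: the largest index attaining the `w`-weighted degree. -/
def IsWPivot {F : Type*} [Field F] {s : ℕ} (w : Fin (s + 1) → ℕ)
    (a : Fin (s + 1) → F[X]) (j : Fin (s + 1)) : Prop :=
  ((a j).degree + (w j : WithBot ℕ) = wdeg w a) ∧
    ∀ j', ((a j').degree + (w j' : WithBot ℕ) = wdeg w a) → j' ≤ j


variable {σ : F →+* F} {δ : F → F}

@[simp]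
lemma skewXMul_zero_s17 : skewXMul σ δ 0 = 0 := by
  simp [skewXMul]

lemma degree_leadingCoeff_skewXMul (hσ : Function.Injective σ) (f : F[X]) :
    degree (skewXMul σ δ f) = degree f + 1 ∧
      leadingCoeff (skewXMul σ δ f) = σ (leadingCoeff f) := by
  rcases eq_or_ne f 0 with rfl | hf
  · simp
  have hdσ : degree (f.map σ) = degree f := degree_map_eq_of_injective hσ f
  -- the `δ`-part does not raise the degree, so the `σ`-part `σ(f) x` is the leading one
  have hlt : degree (f.sum fun n c => C (δ c) * X ^ n) < degree (f.map σ * X) := by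
    refine ((degree_sum_le _ _).trans (Finset.sup_le fun n hn => ?_)).trans_lt
      (hdσ ▸ degree_lt_degree_mul_X ((Polynomial.map_ne_zero_iff hσ).mpr hf))
    exact (degree_C_mul_X_pow_le _ _).trans (le_degree_of_mem_supp n hn)
  refine ⟨?_, ?_⟩
  · rw [skewXMul, degree_add_eq_left_of_degree_lt hlt, degree_mul, degree_X, hdσ]
  · rw [skewXMul, add_comm, leadingCoeff_add_of_degree_lt hlt, leadingCoeff_mul,
      leadingCoeff_X, mul_one, leadingCoeff_map_of_injective hσ]

lemma degree_leadingCoeff_skewXMul_iterate (hσ : Function.Injective σ) (t : ℕ) (f : F[X]) :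
    degree ((skewXMul σ δ)^[t] f) = degree f + t ∧
      leadingCoeff ((skewXMul σ δ)^[t] f) = (⇑σ)^[t] (leadingCoeff f) := by
  induction t with
  | zero => simp
  | succ t ih =>
    obtain ⟨hdeg, hlc⟩ := degree_leadingCoeff_skewXMul (δ := δ) hσ ((skewXMul σ δ)^[t] f)
    rw [Function.iterate_succ_apply', hdeg, hlc, ih.1, ih.2, Function.iterate_succ_apply',
      add_assoc]
    exact ⟨by norm_cast, rfl⟩

lemma skewMul_C_mul_X_pow (c : F) (t : ℕ) (g : F[X]) :
    skewMul σ δ (C c * X ^ t) g = C c * (skewXMul σ δ)^[t] g := by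
  rw [skewMul, C_mul_X_pow_eq_monomial, sum_monomial_index]
  simp

lemma degree_leadingCoeff_skewMul_C_mul_X_pow (hσ : Function.Injective σ) {c : F} (hc : c ≠ 0)
    (t : ℕ) (g : F[X]) :
    degree (skewMul σ δ (C c * X ^ t) g) = degree g + t ∧
      leadingCoeff (skewMul σ δ (C c * X ^ t) g) = c * (⇑σ)^[t] (leadingCoeff g) := by
  obtain ⟨hdeg, hlc⟩ := degree_leadingCoeff_skewXMul_iterate (δ := δ) hσ t g
  rw [skewMul_C_mul_X_pow, degree_C_mul hc, leadingCoeff_mul, leadingCoeff_C, hdeg, hlc]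
  exact ⟨rfl, rfl⟩

@[simp]
lemma skewMul_zero_left (g : F[X]) : skewMul σ δ 0 g = 0 := by
  simp [skewMul]

lemma skewMul_add_left (f₁ f₂ g : F[X]) :
    skewMul σ δ (f₁ + f₂) g = skewMul σ δ f₁ g + skewMul σ δ f₂ g := by
  unfold skewMul
  apply sum_add_index <;> simp [add_mul]

lemma skewMul_neg_left (f g : F[X]) : skewMul σ δ (-f) g = -skewMul σ δ f g :=
  eq_neg_of_add_eq_zero_left (by rw [← skewMul_add_left, neg_add_cancel, skewMul_zero_left])

section WeightedDegree

variable {s : ℕ} (w : Fin (s + 1) → ℕ)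

lemma le_wdeg (a : Fin (s + 1) → F[X]) (r : Fin (s + 1)) :
    (a r).degree + (w r : WithBot ℕ) ≤ wdeg w a :=
  Finset.le_sup (f := fun r => (a r).degree + (w r : WithBot ℕ)) (Finset.mem_univ r)

@[simp]
lemma wdeg_eq_bot {a : Fin (s + 1) → F[X]} : wdeg w a = ⊥ ↔ a = 0 := by
  simp [wdeg, Finset.sup_eq_bot_iff, WithBot.add_eq_bot, funext_iff]

lemma degree_sub_add_le (a b : Fin (s + 1) → F[X]) (r : Fin (s + 1)) :
    ((a - b) r).degree + (w r : WithBot ℕ) ≤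
      max ((a r).degree + (w r : WithBot ℕ)) ((b r).degree + (w r : WithBot ℕ)) := by
  rw [max_add_add_right]
  gcongr
  exact degree_sub_le _ _

lemma wdeg_sub_le (a b : Fin (s + 1) → F[X]) : wdeg w (a - b) ≤ max (wdeg w a) (wdeg w b) :=
  Finset.sup_le fun r _ =>
    (degree_sub_add_le w a b r).trans (max_le_max (le_wdeg w a r) (le_wdeg w b r))

lemma exists_isWPivot (a : Fin (s + 1) → F[X]) : ∃ j, IsWPivot w a j := by
  classical
  obtain ⟨j₀, -, hj₀⟩ := Finset.exists_mem_eq_sup Finset.univ Finset.univ_nonempty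
    fun r => (a r).degree + (w r : WithBot ℕ)
  let S := {r | (a r).degree + (w r : WithBot ℕ) = wdeg w a}.toFinset
  have hS : S.Nonempty := ⟨j₀, by simp [S, wdeg, hj₀]⟩
  exact ⟨S.max' hS, by simpa [S] using S.max'_mem hS, fun r hr => S.le_max' r (by simpa [S])⟩

variable {w}

lemma IsWPivot.lt_wdeg {a : Fin (s + 1) → F[X]} {j r : Fin (s + 1)} (ha : IsWPivot w a j)
    (hr : j < r) : (a r).degree + (w r : WithBot ℕ) < wdeg w a :=
  (le_wdeg w a r).lt_of_ne fun h => (ha.2 r h).not_gt hr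

lemma IsWPivot.ne_zero {a : Fin (s + 1) → F[X]} {j : Fin (s + 1)} (ha : IsWPivot w a j)
    (ha0 : a ≠ 0) : a j ≠ 0 := by
  intro h
  exact ha0 ((wdeg_eq_bot w).1 (by rw [← ha.1, h, degree_zero, WithBot.bot_add]))

lemma wdeg_of_degree_eq_add {a b : Fin (s + 1) → F[X]} {t : ℕ}
    (h : ∀ r, (b r).degree = (a r).degree + t) : wdeg w b = wdeg w a + t := by
  rw [wdeg, wdeg, Finset.apply_sup_eq_sup_comp_of_linearOrder (· + (t : WithBot ℕ))
    (fun _ _ h => add_le_add_left h _) (WithBot.bot_add _)]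
  refine Finset.sup_congr rfl fun r _ => ?_
  simp only [Function.comp_apply, h, add_right_comm]

lemma IsWPivot.of_degree_eq_add {a b : Fin (s + 1) → F[X]} {j : Fin (s + 1)} {t : ℕ}
    (ha : IsWPivot w a j) (h : ∀ r, (b r).degree = (a r).degree + t) : IsWPivot w b j := by
  have key : ∀ r, (b r).degree + (w r : WithBot ℕ) = wdeg w b ↔
      (a r).degree + (w r : WithBot ℕ) = wdeg w a := fun r => by
    rw [wdeg_of_degree_eq_add h, h, add_right_comm,
      WithBot.add_right_inj (WithBot.natCast_ne_bot t)]
  exact ⟨(key j).2 ha.1, fun r hr => ha.2 r ((key r).1 hr)⟩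

lemma toLex_wdeg_lt {a : Fin (s + 1) → F[X]} {j j' : Fin (s + 1)} {d : WithBot ℕ}
    (ha : IsWPivot w a j') (hle : wdeg w a ≤ d)
    (hlt : ∀ r, j ≤ r → (a r).degree + (w r : WithBot ℕ) < d) :
    toLex (wdeg w a, j') < toLex (d, j) := by
  refine Prod.Lex.toLex_lt_toLex.2 (hle.lt_or_eq.imp id fun hd => ⟨hd, ?_⟩)
  by_contra! hj
  exact (hlt j' hj).ne (ha.1.trans hd)

lemma IsWPivot.toLex_sub_lt {p g : Fin (s + 1) → F[X]} {j j' : Fin (s + 1)} (hp : IsWPivot w p j)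
    (hp0 : p ≠ 0) (hg : IsWPivot w g j) (hgp : wdeg w g = wdeg w p)
    (hlc : (g j).leadingCoeff = (p j).leadingCoeff) (hq : IsWPivot w (p - g) j') :
    toLex (wdeg w (p - g), j') < toLex (wdeg w p, j) := by
  have hdeg : (p j).degree = (g j).degree :=
    (WithBot.add_right_inj (WithBot.natCast_ne_bot (w j))).1 (hp.1.trans (hgp ▸ hg.1).symm)
  refine toLex_wdeg_lt hq ((wdeg_sub_le w p g).trans (by rw [hgp, max_self])) fun r hr => ?_
  rcases hr.eq_or_lt with rfl | hr
  · calc ((p - g) j).degree + (w j : WithBot ℕ) < (p j).degree + (w j : WithBot ℕ) :=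
          WithBot.add_lt_add_right (WithBot.natCast_ne_bot _)
            (degree_sub_lt_left hdeg (hp.ne_zero hp0) hlc.symm)
      _ = wdeg w p := hp.1
  · exact (degree_sub_add_le w p g r).trans_lt (max_lt (hp.lt_wdeg hr) (hgp ▸ hg.lt_wdeg hr))

end WeightedDegree

def IsSkewCombination {ι κ : Type*} [Fintype ι] (σ : F →+* F) (δ : F → F)
    (b : ι → κ → F[X]) (p : κ → F[X]) : Prop :=
  ∃ a : ι → F[X], ∀ r, p r = ∑ j, skewMul σ δ (a j) (b j r)

namespace IsSkewCombination

variable {ι κ : Type*} [Fintype ι] {b : ι → κ → F[X]}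

lemma zero : IsSkewCombination σ δ b 0 :=
  ⟨0, fun r => by simp⟩

lemma add_skewMul {p : κ → F[X]} (hp : IsSkewCombination σ δ b p) (f : F[X]) (j : ι) :
    IsSkewCombination σ δ b (p + fun r => skewMul σ δ f (b j r)) := by
  classical
  obtain ⟨a, ha⟩ := hp
  refine ⟨a + Pi.single j f, fun r => ?_⟩
  simp only [Pi.add_apply, skewMul_add_left, Finset.sum_add_distrib, ha r]
  congr 1
  rw [Fintype.sum_eq_single j fun i hi => by rw [Pi.single_eq_of_ne hi, skewMul_zero_left],
    Pi.single_eq_same]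

end IsSkewCombination

variable {s : ℕ} {w : Fin (s + 1) → ℕ}

lemma exists_toLex_sub_skewMul_lt (hσ : Function.Injective σ) {p v : Fin (s + 1) → F[X]}
    {j : Fin (s + 1)} (hp : IsWPivot w p j) (hp0 : p ≠ 0) (hv : IsWPivot w v j) (hv0 : v ≠ 0)
    (hle : wdeg w v ≤ wdeg w p) :
    ∃ f : F[X], ∀ j', IsWPivot w (p - fun r => skewMul σ δ f (v r)) j' →
      toLex (wdeg w (p - fun r => skewMul σ δ f (v r)), j') < toLex (wdeg w p, j) := by
  obtain ⟨N, hN⟩ := WithBot.ne_bot_iff_exists.1 (mt (wdeg_eq_bot w).1 hp0)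
  obtain ⟨M, hM⟩ := WithBot.ne_bot_iff_exists.1 (mt (wdeg_eq_bot w).1 hv0)
  obtain ⟨t, rfl⟩ : ∃ t, N = M + t :=
    Nat.exists_eq_add_of_le (by rw [← hM, ← hN] at hle; exact_mod_cast hle)
  have hσt : (⇑σ)^[t] (v j).leadingCoeff ≠ 0 := by
    rw [← iterate_map_zero σ t, (hσ.iterate t).ne_iff]
    exact leadingCoeff_ne_zero.2 (hv.ne_zero hv0)
  set c := (p j).leadingCoeff / (⇑σ)^[t] (v j).leadingCoeff
  have hc : c ≠ 0 := div_ne_zero (leadingCoeff_ne_zero.2 (hp.ne_zero hp0)) hσt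
  have hdeg r := (degree_leadingCoeff_skewMul_C_mul_X_pow (δ := δ) hσ hc t (v r)).1
  refine ⟨C c * X ^ t, fun j' hq => hp.toLex_sub_lt hp0 (hv.of_degree_eq_add hdeg) ?_ ?_ hq⟩
  · rw [wdeg_of_degree_eq_add hdeg, ← hM, ← hN, ← WithBot.coe_natCast, ← WithBot.coe_add,
      Nat.cast_id]
  · rw [(degree_leadingCoeff_skewMul_C_mul_X_pow hσ hc t (v j)).2, div_mul_cancel₀ _ hσt]

theorem isSkewCombination_of_isWPivot_min (hσ : Function.Injective σ)
    {K : Set (Fin (s + 1) → F[X])} (hKadd : ∀ p q, p ∈ K → q ∈ K → p + q ∈ K)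
    (hKsmul : ∀ (f : F[X]) (p), p ∈ K → (fun r => skewMul σ δ f (p r)) ∈ K)
    {b : Fin (s + 1) → Fin (s + 1) → F[X]} (hbK : ∀ j, b j ∈ K) (hbne : ∀ j, b j ≠ 0)
    (hpiv : ∀ j, IsWPivot w (b j) j)
    (hmin : ∀ j, ∀ p ∈ K, p ≠ 0 → IsWPivot w p j → wdeg w (b j) ≤ wdeg w p)
    {p : Fin (s + 1) → F[X]} (hp : p ∈ K) : IsSkewCombination σ δ b p := by
  obtain ⟨j, hj⟩ := exists_isWPivot w p
  induction h : toLex (wdeg w p, j) using WellFoundedLT.induction generalizing p j with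
  | _ k ih =>
    rcases eq_or_ne p 0 with rfl | hp0
    · exact .zero
    obtain ⟨f, hf⟩ := exists_toLex_sub_skewMul_lt (δ := δ) hσ hj hp0 (hpiv j) (hbne j)
      (hmin j p hp hp0 hj)
    set q := p - fun r => skewMul σ δ f (b j r)
    have hqK : q ∈ K := by
      convert hKadd _ _ hp (hKsmul (-f) (b j) (hbK j)) using 1
      simp only [q, sub_eq_add_neg, skewMul_neg_left]
      rfl
    obtain ⟨j', hj'⟩ := exists_isWPivot w q
    simpa [q] using (ih _ (h ▸ hf j' hj') hqK j' hj' rfl).add_skewMul f j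

theorem weak_popov_rows_generate_general {F : Type*} [Field F] (σ : F ≃+* F) (δ : F → F)
    (s : ℕ) (w : Fin (s + 1) → ℕ) (K : Set (Fin (s + 1) → F[X]))
    (hKadd : ∀ p q, p ∈ K → q ∈ K → p + q ∈ K)
    (hKsmul : ∀ (f : F[X]) (p), p ∈ K → (fun r => skewMul σ.toRingHom δ f (p r)) ∈ K)
    (b : Fin (s + 1) → Fin (s + 1) → F[X])
    (hbK : ∀ j, b j ∈ K) (hbne : ∀ j, b j ≠ 0)
    (hpiv : ∀ j, IsWPivot w (b j) j)
    (hmin : ∀ j, ∀ p ∈ K, p ≠ 0 → IsWPivot w p j → wdeg w (b j) ≤ wdeg w p) :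
    ∀ p ∈ K, ∃ a : Fin (s + 1) → F[X],
      ∀ r, p r = ∑ j, skewMul σ.toRingHom δ (a j) (b j r) :=
  fun _ hp => isSkewCombination_of_isWPivot_min σ.injective hKadd hKsmul hbK hbne hpiv hmin hp

/-- If the rows `b₀,…,b_s` have pairwise distinct `w`-pivot indices (row `bⱼ` having pivot
index `j`) and each `bⱼ` has minimal `w`-weighted degree among the nonzero elements of the
left submodule `K` with pivot index `j`, then every `p ∈ K` is a left skew-polynomial linear
combination of `b₀,…,b_s`. -/
theorem weak_popov_rows_generate {F : Type*} [Field F] [Fintype F] (σ : F ≃+* F) (δ : F → F)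
    (hδadd : ∀ a b : F, δ (a + b) = δ a + δ b)
    (hδmul : ∀ a b : F, δ (a * b) = δ a * b + σ a * δ b)
    (s : ℕ) (w : Fin (s + 1) → ℕ) (K : Set (Fin (s + 1) → F[X]))
    (hK0 : (0 : Fin (s + 1) → F[X]) ∈ K)
    (hKadd : ∀ p q, p ∈ K → q ∈ K → p + q ∈ K)
    (hKsmul : ∀ (f : F[X]) (p), p ∈ K → (fun r => skewMul σ.toRingHom δ f (p r)) ∈ K)
    (b : Fin (s + 1) → Fin (s + 1) → F[X])
    (hbK : ∀ j, b j ∈ K) (hbne : ∀ j, b j ≠ 0)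
    (hpiv : ∀ j, IsWPivot w (b j) j)
    (hmin : ∀ j, ∀ p ∈ K, p ≠ 0 → IsWPivot w p j → wdeg w (b j) ≤ wdeg w p) :
    ∀ p ∈ K, ∃ a : Fin (s + 1) → F[X],
      ∀ r, p r = ∑ j, skewMul σ.toRingHom δ (a j) (b j r) :=
  weak_popov_rows_generate_general σ δ s w K hKadd hKsmul b hbK hbne hpiv hmin
end
end
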